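/- arXiv:0810.4225 — 10 statements merged into one kernel-verified Lean document; each statement's English description precedes it below -/
import Mathlib

section
/- Let M be a real m×n matrix with min(M) ≤ -||M₊||_F, where M₊ = max(0, M) entrywise. Then any best rank-one approximation vwᵀ of M in the Frobenius norm (v ∈ ℝᵐ, w ∈ ℝⁿ) contains at least one nonpositive entry, i.e., it is not the case that v_i w_j > 0 for all i, j. -/
/-- If min(M) ≤ -‖M₊‖_F, then any best rank-one approximation vwᵀ of M
(in the Frobenius norm) contains at least one nonpositive entry. -/
theorem stmt_0 (m n : ℕ) (M : Fin m → Fin n → ℝ)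
    (hmin : ∃ i j, M i j ≤ - Real.sqrt (∑ i, ∑ j, (max 0 (M i j)) ^ 2))
    (v : Fin m → ℝ) (w : Fin n → ℝ)
    (hopt : ∀ (v' : Fin m → ℝ) (w' : Fin n → ℝ),
      ∑ i, ∑ j, (M i j - v i * w j) ^ 2 ≤ ∑ i, ∑ j, (M i j - v' i * w' j) ^ 2) :
    ¬ (∀ i j, 0 < v i * w j) := by
  obtain ⟨i₀, j₀, h0⟩ := hmin
  intro hpos
  set P : ℝ := ∑ i, ∑ j, (max 0 (M i j)) ^ 2 with hPdef
  have hPnn : 0 ≤ P := by positivity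
  have hsq : Real.sqrt P ^ 2 = P := Real.sq_sqrt hPnn
  have hm0le : M i₀ j₀ ≤ 0 := le_trans h0 (neg_nonpos.mpr (Real.sqrt_nonneg P))
  have hm0sq : P ≤ M i₀ j₀ ^ 2 := by nlinarith [Real.sqrt_nonneg P]
  have hx0 : 0 < v i₀ * w j₀ := hpos i₀ j₀
  have hc := hopt (fun i => if i = i₀ then M i₀ j₀ else 0) (fun j => if j = j₀ then 1 else 0)
  have hcval : ∑ i, ∑ j, (M i j - (if i = i₀ then M i₀ j₀ else 0) * (if j = j₀ then (1:ℝ) else 0)) ^ 2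
      = (∑ i, ∑ j, (M i j) ^ 2) - M i₀ j₀ ^ 2 := by
    have key : ∀ i j, (M i j - (if i = i₀ then M i₀ j₀ else 0) * (if j = j₀ then (1:ℝ) else 0)) ^ 2
        = (M i j) ^ 2 - (if i = i₀ then (if j = j₀ then M i₀ j₀ ^ 2 else 0) else 0) := by
      intro i j
      by_cases hi : i = i₀
      · by_cases hj : j = j₀
        · subst hi; subst hj; simp
        · simp [hi, hj]
      · simp [hi]
    have hite2 : (∑ i, ∑ j, (if i = i₀ then (if j = j₀ then M i₀ j₀ ^ 2 else 0) else 0))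
        = M i₀ j₀ ^ 2 := by
      rw [Finset.sum_eq_single i₀ (fun b _ hb => by simp [hb]) (by simp)]
      rw [Finset.sum_eq_single j₀ (fun b _ hb => by simp [hb]) (by simp)]
      simp
    simp_rw [key, Finset.sum_sub_distrib]
    rw [hite2]
  have hterm : ∀ i j, (M i j) ^ 2 - (max 0 (M i j)) ^ 2
        + (if i = i₀ ∧ j = j₀ then (v i₀ * w j₀) ^ 2 else 0)
      ≤ (M i j - v i * w j) ^ 2 := by
    intro i j
    by_cases h : i = i₀ ∧ j = j₀
    · obtain ⟨hi, hj⟩ := h; subst hi; subst hj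
      simp [max_eq_left hm0le]
      nlinarith
    · simp only [h, if_false, add_zero]
      nlinarith [sq_nonneg (max 0 (M i j) - v i * w j),
        mul_le_mul_of_nonneg_right (le_max_right 0 (M i j)) (le_of_lt (hpos i j))]
  have hsum : (∑ i, ∑ j, ((M i j) ^ 2 - (max 0 (M i j)) ^ 2
        + (if i = i₀ ∧ j = j₀ then (v i₀ * w j₀) ^ 2 else 0)))
      ≤ ∑ i, ∑ j, (M i j - v i * w j) ^ 2 :=
    Finset.sum_le_sum fun i _ => Finset.sum_le_sum fun j _ => hterm i j
  have hsumval : (∑ i, ∑ j, ((M i j) ^ 2 - (max 0 (M i j)) ^ 2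
        + (if i = i₀ ∧ j = j₀ then (v i₀ * w j₀) ^ 2 else 0)))
      = (∑ i, ∑ j, (M i j) ^ 2) - P + (v i₀ * w j₀) ^ 2 := by
    have hite : (∑ i, ∑ j, (if i = i₀ ∧ j = j₀ then (v i₀ * w j₀) ^ 2 else 0))
        = (v i₀ * w j₀) ^ 2 := by
      rw [Finset.sum_eq_single i₀ (fun b _ hb => by simp [hb]) (by simp)]
      rw [Finset.sum_eq_single j₀ (fun b _ hb => by simp [hb]) (by simp)]
      simp
    simp_rw [Finset.sum_add_distrib, Finset.sum_sub_distrib]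
    rw [hite]
  rw [hcval] at hc
  rw [hsumval] at hsum
  nlinarith
end

section
/- Let M_b ∈ {0,1}^{m×n} be the adjacency matrix of a bipartite graph with edge set E (|E| = number of ones in M_b), and for d > 0 set M_d = (1+d)M_b - d·J, where J is the all-ones matrix. If d ≥ √|E|, then for any optimal solution (v, w), v ≥ 0, w ≥ 0, of min ||M_d - vwᵀ||_F², the product vwᵀ is a 0/1 matrix satisfying vwᵀ ≤ M_b entrywise. -/
/-!
Write `V = ‖v‖²`, `W = ‖w‖²`. Perturbing a single positive coordinate of an optimum gives the
first-order conditions `(M w)ᵢ = W vᵢ` and `(vᵀ M)ⱼ = V wⱼ` on the support, hence `vᵀ M w = V W`,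
and Cauchy–Schwarz against the positive part of `M` gives `V W ≤ ‖M₊‖_F²`. A second-order
perturbation along a direction orthogonal to `v` gives `(vᵢ wⱼ - Mᵢⱼ)² ≤ (V - vᵢ²) W < V W` for
every `(i, j)` in the support of `v wᵀ`, so no such entry is `≤ -‖M₊‖_F`.

For `M_d` we have `‖(M_d)₊‖_F² = |E| ≤ d²`, so the support of `v wᵀ` avoids the entries `-d`, i.e.
lies in `E`, where `M_d = 1`; the first-order conditions then force `vᵢ wⱼ = 1` there.
-/

open Filter Topology Matrix

theorem eventually_nhdsGT_zero_pos_add_mul {a : ℝ} (ha : 0 < a) (b : ℝ) :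
    ∀ᶠ t in 𝓝[>] 0, 0 < a + t * b := by
  have : Tendsto (fun t : ℝ => a + t * b) (𝓝 0) (𝓝 a) := by
    simpa using (by fun_prop : Continuous fun t : ℝ => a + t * b).tendsto 0
  exact nhdsWithin_le_nhds (this.eventually (lt_mem_nhds ha))

theorem nonneg_of_eventually_nonneg_quadratic {c₀ c₁ c₂ : ℝ}
    (h : ∀ᶠ t in 𝓝[>] 0, 0 ≤ c₀ + c₁ * t + c₂ * t ^ 2) : 0 ≤ c₀ := by
  have : Tendsto (fun t : ℝ => c₀ + c₁ * t + c₂ * t ^ 2) (𝓝 0) (𝓝 c₀) := by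
    simpa using (by fun_prop : Continuous fun t : ℝ => c₀ + c₁ * t + c₂ * t ^ 2).tendsto 0
  exact ge_of_tendsto (this.mono_left nhdsWithin_le_nhds) h

variable {m n : Type*} [Fintype m] [Fintype n]

theorem dotProduct_self_eq_sum_sq (v : m → ℝ) : v ⬝ᵥ v = ∑ i, v i ^ 2 := by
  simp only [dotProduct, sq]

theorem dotProduct_self_pos_of_apply_pos {v : m → ℝ} {i : m} (hi : 0 < v i) : 0 < v ⬝ᵥ v := by
  simpa using dotProduct_star_self_pos_iff.mpr (ne_of_apply_ne (· i) hi.ne')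

def rankOneError (M : Matrix m n ℝ) (x : m → ℝ) (y : n → ℝ) : ℝ :=
  ∑ i, ∑ j, (M i j - x i * y j) ^ 2

theorem rankOneError_eq (M : Matrix m n ℝ) (x : m → ℝ) (y : n → ℝ) :
    rankOneError M x y = ∑ i, ∑ j, M i j ^ 2 - 2 * (x ⬝ᵥ M *ᵥ y) + (x ⬝ᵥ x) * (y ⬝ᵥ y) := by
  simp only [rankOneError, dotProduct, mulVec]
  rw [Finset.sum_mul_sum, Finset.mul_sum, ← Finset.sum_sub_distrib, ← Finset.sum_add_distrib]
  refine Finset.sum_congr rfl fun i _ => ?_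
  rw [Finset.mul_sum, Finset.mul_sum, ← Finset.sum_sub_distrib, ← Finset.sum_add_distrib]
  refine Finset.sum_congr rfl fun j _ => ?_
  ring

theorem rankOneError_transpose (M : Matrix m n ℝ) (x : m → ℝ) (y : n → ℝ) :
    rankOneError Mᵀ y x = rankOneError M x y := by
  rw [rankOneError, Finset.sum_comm]
  simp only [transpose_apply, mul_comm, rankOneError]

def IsNonnegRankOneMin (M : Matrix m n ℝ) (v : m → ℝ) (w : n → ℝ) : Prop :=
  0 ≤ v ∧ 0 ≤ w ∧ ∀ x y, 0 ≤ x → 0 ≤ y → rankOneError M v w ≤ rankOneError M x y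

namespace IsNonnegRankOneMin

variable {M : Matrix m n ℝ} {v : m → ℝ} {w : n → ℝ}

theorem transpose (h : IsNonnegRankOneMin M v w) : IsNonnegRankOneMin Mᵀ w v :=
  ⟨h.2.1, h.1, fun y x hy hx => by simpa only [rankOneError_transpose] using h.2.2 x y hx hy⟩

theorem mulVec_apply [DecidableEq m] (h : IsNonnegRankOneMin M v w) {i : m} (hi : 0 < v i) :
    (M *ᵥ w) i = (w ⬝ᵥ w) * v i := by
  have key : ∀ s : ℝ, 0 ≤ s * ((w ⬝ᵥ w) * v i - (M *ᵥ w) i) := by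
    intro s
    suffices 0 ≤ 2 * (s * ((w ⬝ᵥ w) * v i - (M *ᵥ w) i)) by linarith
    refine nonneg_of_eventually_nonneg_quadratic (c₁ := s ^ 2 * (w ⬝ᵥ w)) (c₂ := 0) ?_
    filter_upwards [self_mem_nhdsWithin, eventually_nhdsGT_zero_pos_add_mul hi s]
      with t (ht : 0 < t) hvt
    have hx : 0 ≤ v + (t * s) • Pi.single i 1 := by
      intro k
      rcases eq_or_ne k i with rfl | hk
      · simpa using hvt.le
      · simpa [hk] using h.1 k
    have hmin := h.2.2 _ w hx h.2.1
    rw [rankOneError_eq, rankOneError_eq] at hmin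
    simp only [add_dotProduct, dotProduct_add, smul_dotProduct, dotProduct_smul,
      dotProduct_single_one, single_one_dotProduct, smul_eq_mul, Pi.add_apply, Pi.smul_apply,
      Pi.single_eq_same] at hmin
    refine nonneg_of_mul_nonneg_right (a := t) ?_ ht
    linarith
  linarith [key 1, key (-1)]

theorem vecMul_apply [DecidableEq n] (h : IsNonnegRankOneMin M v w) {j : n} (hj : 0 < w j) :
    (v ᵥ* M) j = (v ⬝ᵥ v) * w j := by
  simpa only [mulVec_transpose] using h.transpose.mulVec_apply hj

theorem dotProduct_mulVec_eq (h : IsNonnegRankOneMin M v w) :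
    v ⬝ᵥ M *ᵥ w = (v ⬝ᵥ v) * (w ⬝ᵥ w) := by
  classical
  have hterm : ∀ i, v i * (M *ᵥ w) i = v i * v i * (w ⬝ᵥ w) := by
    intro i
    rcases (h.1 i).eq_or_lt with hvi | hvi
    · simp [← hvi]
    · rw [h.mulVec_apply hvi]; ring
  simp only [dotProduct, hterm, Finset.sum_mul]

theorem dotProduct_self_mul_le (h : IsNonnegRankOneMin M v w) :
    (v ⬝ᵥ v) * (w ⬝ᵥ w) ≤ ∑ i, ∑ j, max (M i j) 0 ^ 2 := by
  have hle : (v ⬝ᵥ v) * (w ⬝ᵥ w) ≤ ∑ i, ∑ j, max (M i j) 0 * (v i * w j) := by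
    rw [← h.dotProduct_mulVec_eq]
    simp only [dotProduct, mulVec, Finset.mul_sum]
    refine Finset.sum_le_sum fun i _ => Finset.sum_le_sum fun j _ => ?_
    nlinarith [le_max_left (M i j) 0, mul_nonneg (h.1 i) (h.2.1 j)]
  have hCS := Finset.sum_mul_sq_le_sq_mul_sq Finset.univ (fun p : m × n => max (M p.1 p.2) 0)
    (fun p => v p.1 * w p.2)
  simp only [Fintype.sum_prod_type, mul_pow, ← Finset.sum_mul_sum] at hCS
  rw [← dotProduct_self_eq_sum_sq, ← dotProduct_self_eq_sum_sq] at hCS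
  have hVW : 0 ≤ (v ⬝ᵥ v) * (w ⬝ᵥ w) := by
    simp only [dotProduct_self_eq_sum_sq]; positivity
  have hP : 0 ≤ ∑ i, ∑ j, max (M i j) 0 ^ 2 := by positivity
  nlinarith [mul_le_mul hle hle hVW (hVW.trans hle)]

/-- Second-order condition along `x = v + t (vᵢ v - ‖v‖² eᵢ)`, `y = w + t c eⱼ`, where the
first direction is orthogonal to `v` and `c = vᵢ wⱼ - Mᵢⱼ` is the optimal ratio of step sizes. -/
theorem sq_sub_le [DecidableEq m] [DecidableEq n] (h : IsNonnegRankOneMin M v w) {i : m} {j : n}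
    (hi : 0 < v i) (hj : 0 < w j) :
    (v i * w j - M i j) ^ 2 ≤ (v ⬝ᵥ v - v i ^ 2) * (w ⬝ᵥ w) := by
  set c := v i * w j - M i j with hc
  have hV : 0 < v ⬝ᵥ v := dotProduct_self_pos_of_apply_pos hi
  suffices 0 ≤ -c ^ 2 + (v ⬝ᵥ v - v i ^ 2) * (w ⬝ᵥ w) by linarith
  refine nonneg_of_eventually_nonneg_quadratic (c₁ := 2 * (v ⬝ᵥ v - v i ^ 2) * c * w j)
    (c₂ := (v ⬝ᵥ v - v i ^ 2) * c ^ 2) ?_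
  filter_upwards [self_mem_nhdsWithin, eventually_nhdsGT_zero_pos_add_mul hi (v i * v i - v ⬝ᵥ v),
    eventually_nhdsGT_zero_pos_add_mul hj c] with t (ht : 0 < t) hxt hyt
  have hx : 0 ≤ v + t • (v i • v - (v ⬝ᵥ v) • Pi.single i 1) := by
    intro k
    rcases eq_or_ne k i with rfl | hk
    · simpa using hxt.le
    · have hvk : 0 ≤ v k := h.1 k
      have : 0 ≤ v k + t * (v i * v k) := by positivity
      simpa [hk] using this
  have hy : 0 ≤ w + (t * c) • Pi.single j 1 := by
    intro k
    rcases eq_or_ne k j with rfl | hk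
    · simpa using hyt.le
    · simpa [hk] using h.2.1 k
  have hmin := h.2.2 _ _ hx hy
  rw [rankOneError_eq, rankOneError_eq] at hmin
  simp only [add_dotProduct, dotProduct_add, smul_dotProduct, dotProduct_smul, mulVec_add,
    mulVec_smul, sub_dotProduct, dotProduct_sub, dotProduct_single_one, single_one_dotProduct,
    smul_eq_mul, Pi.add_apply, Pi.smul_apply, Pi.single_eq_same, Pi.sub_apply] at hmin
  have hcol : v ⬝ᵥ M *ᵥ Pi.single j 1 = (v ⬝ᵥ v) * w j := by
    rw [dotProduct_mulVec, dotProduct_single_one, h.vecMul_apply hj]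
  have hentry : (M *ᵥ Pi.single j 1) i = M i j := by simp
  rw [hcol, hentry, h.mulVec_apply hi, h.dotProduct_mulVec_eq,
    show M i j = v i * w j - c by rw [hc]; ring] at hmin
  refine nonneg_of_mul_nonneg_right (a := v ⬝ᵥ v * t ^ 2) ?_ (by positivity)
  linarith

theorem neg_sqrt_lt_apply [DecidableEq m] [DecidableEq n] (h : IsNonnegRankOneMin M v w)
    {i : m} {j : n} (hi : 0 < v i) (hj : 0 < w j) :
    -√(∑ i, ∑ j, max (M i j) 0 ^ 2) < M i j := by
  by_contra! hle
  have hsq : ∑ i, ∑ j, max (M i j) 0 ^ 2 ≤ (v i * w j - M i j) ^ 2 :=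
    (Real.sqrt_le_iff.mp (by nlinarith [mul_pos hi hj])).2
  have hW := dotProduct_self_pos_of_apply_pos hj
  nlinarith [h.sq_sub_le hi hj, h.dotProduct_self_mul_le, mul_pos (pow_pos hi 2) hW]

theorem mul_eq_one (h : IsNonnegRankOneMin M v w)
    (hM : ∀ i j, 0 < v i → 0 < w j → M i j = 1) {i : m} {j : n} (hi : 0 < v i) (hj : 0 < w j) :
    v i * w j = 1 := by
  classical
  have hrow : ∀ k, v k * (M *ᵥ w) k = v k * ∑ l, w l := by
    intro k
    rcases (h.1 k).eq_or_lt with hk | hk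
    · simp [← hk]
    congr 1
    refine Finset.sum_congr rfl fun l _ => ?_
    rcases (h.2.1 l).eq_or_lt with hl | hl
    · simp [← hl]
    · simp [hM k l hk hl]
  have hcol : (v ᵥ* M) j = ∑ k, v k := by
    refine Finset.sum_congr rfl fun k _ => ?_
    rcases (h.1 k).eq_or_lt with hk | hk
    · simp [← hk]
    · simp [hM k j hk hj]
  have hVW : (v ⬝ᵥ v) * (w ⬝ᵥ w) = (∑ k, v k) * ∑ l, w l := by
    rw [← h.dotProduct_mulVec_eq, dotProduct, Finset.sum_mul]
    exact Finset.sum_congr rfl fun k _ => hrow k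
  have hpos : 0 < (v ⬝ᵥ v) * (w ⬝ᵥ w) :=
    mul_pos (dotProduct_self_pos_of_apply_pos hi) (dotProduct_self_pos_of_apply_pos hj)
  have hrowi : (w ⬝ᵥ w) * v i = ∑ l, w l := by
    rw [← h.mulVec_apply hi]; exact mul_left_cancel₀ hi.ne' (hrow i)
  refine mul_left_cancel₀ hpos.ne' ?_
  calc (v ⬝ᵥ v) * (w ⬝ᵥ w) * (v i * w j) = ((w ⬝ᵥ w) * v i) * ((v ⬝ᵥ v) * w j) := by ring
    _ = (v ⬝ᵥ v) * (w ⬝ᵥ w) * 1 := by rw [hrowi, ← h.vecMul_apply hj, hcol, hVW]; ring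

end IsNonnegRankOneMin

/-- For d ≥ √|E|, any optimal solution (v,w) of the rank-one nonnegative
factorization of M_d = (1+d)M_b - d·J has vwᵀ binary with vwᵀ ≤ M_b entrywise. -/
theorem stmt_2 (m n : ℕ) (Mb : Fin m → Fin n → ℝ)
    (hbin : ∀ i j, Mb i j = 0 ∨ Mb i j = 1)
    (d : ℝ) (hd0 : 0 < d)
    (Md : Fin m → Fin n → ℝ) (hMd : ∀ i j, Md i j = (1 + d) * Mb i j - d)
    (hdE : Real.sqrt (∑ i, ∑ j, Mb i j) ≤ d)
    (v : Fin m → ℝ) (w : Fin n → ℝ) (hv : ∀ i, 0 ≤ v i) (hw : ∀ j, 0 ≤ w j)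
    (hopt : ∀ (v' : Fin m → ℝ) (w' : Fin n → ℝ), (∀ i, 0 ≤ v' i) → (∀ j, 0 ≤ w' j) →
      ∑ i, ∑ j, (Md i j - v i * w j) ^ 2 ≤ ∑ i, ∑ j, (Md i j - v' i * w' j) ^ 2) :
    ∀ i j, (v i * w j = 0 ∨ v i * w j = 1) ∧ v i * w j ≤ Mb i j := by
  have hmin : IsNonnegRankOneMin Md v w := ⟨hv, hw, hopt⟩
  have hposPart : ∑ i, ∑ j, max (Md i j) 0 ^ 2 = ∑ i, ∑ j, Mb i j := by
    refine Finset.sum_congr rfl fun i _ => Finset.sum_congr rfl fun j _ => ?_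
    rcases hbin i j with h | h <;> simp [hMd, h, hd0.le]
  have hsupp : ∀ i j, 0 < v i → 0 < w j → Mb i j = 1 := by
    intro i j hi hj
    refine (hbin i j).resolve_left fun h0 => ?_
    have := hmin.neg_sqrt_lt_apply hi hj
    rw [hposPart, hMd, h0] at this
    linarith
  intro i j
  by_cases hij : 0 < v i ∧ 0 < w j
  · have hone := hmin.mul_eq_one (fun i j hi hj => by rw [hMd, hsupp i j hi hj]; ring) hij.1 hij.2
    exact ⟨Or.inr hone, (hsupp i j hij.1 hij.2).symm ▸ hone.le⟩
  · have hzero : v i * w j = 0 := by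
      rcases not_and_or.mp hij with h | h
      · simp [le_antisymm (not_lt.mp h) (hv i)]
      · simp [le_antisymm (not_lt.mp h) (hw j)]
    exact ⟨Or.inl hzero, hzero ▸ (hbin i j).elim (·.ge) (·.ge.trans' zero_le_one)⟩
end

section
/- Let M_b ∈ {0,1}^{m×n} with no zero row or column, M_d = (1+d)M_b - d·J for d > max(m,n) - 1. Then a pair (v, w) with v ∈ ℝᵐ₊ \ {0}, w ∈ ℝⁿ₊ \ {0}, vwᵀ binary and vwᵀ ≤ M_b (i.e., a feasible biclique solution), is a nontrivial stationary point of min_{v,w ≥ 0} ||M_d - vwᵀ||_F² (i.e., satisfies v = max(0, M_d wᵀ / ||w||₂²) and wᵀ = max(0, vᵀ M_d / ||v||₂²)) if and only if the biclique is maximal, i.e., there is no index i with v_i = 0 and M_b(i,j) = 1 for all j with w_j ≠ 0, and no index j with w_j = 0 and M_b(i,j) = 1 for all i with v_i ≠ 0. -/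
/-!
Feasibility forces a biclique solution to be `v = a·𝟙_I`, `w = a⁻¹·𝟙_J` with `M_b = 1` on `I × J`.
The update of row `i` against `w` is then `(1 + d)·r - d·|J|` over `|J|·a⁻¹`, clipped at `0`,
where `r` counts the ones of row `i` on `J`. A row full on `J` gives exactly `a`; a row with a
zero on `J` has `r ≤ |J| - 1`, so the numerator is at most `|J| - 1 - d ≤ 0` and the update is `0`.
Hence the rows outside `I` are fixed exactly when none of them is full on `J`, i.e. when `I`
cannot be enlarged, and symmetrically for the columns.
-/

open Finset

/-- The minimiser of `‖a - t • w‖²` over `t ≥ 0`: the paper's update of one entry of `v`. -/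
noncomputable def rankOneUpdate {κ : Type*} [Fintype κ] (a w : κ → ℝ) : ℝ :=
  max 0 ((∑ j, a j * w j) / ∑ j, w j ^ 2)

section

variable {ι κ : Type*} [Fintype κ] [DecidableEq ι] [DecidableEq κ]

omit [Fintype κ] [DecidableEq κ] in
lemma eq_ite_of_mul_eq_one [Fintype ι] {v : ι → ℝ} {w : κ → ℝ}
    (hvw : ∀ i j, v i ≠ 0 → w j ≠ 0 → v i * w j = 1) {i₀ : ι} {j₀ : κ} (hi₀ : v i₀ ≠ 0)
    (hj₀ : w j₀ ≠ 0) (i : ι) : v i = if i ∈ univ.filter (v · ≠ 0) then v i₀ else 0 := by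
  by_cases hi : v i = 0
  · simp [hi]
  · simpa [hi] using mul_right_cancel₀ hj₀ ((hvw i j₀ hi hj₀).trans (hvw i₀ j₀ hi₀ hj₀).symm)

lemma rankOneUpdate_ite_mem (a : κ → ℝ) (J : Finset κ) {b : ℝ} (hb : b ≠ 0) :
    rankOneUpdate a (fun j => if j ∈ J then b else 0) = max 0 ((∑ j ∈ J, a j) / (#J * b)) := by
  have hnum : ∑ j, a j * (if j ∈ J then b else 0) = b * ∑ j ∈ J, a j := by
    simp [mul_ite, sum_ite_mem, mul_sum, mul_comm]
  have hden : ∑ j, (if j ∈ J then b else 0) ^ 2 = #J * b ^ 2 := by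
    simp [ite_pow, sum_ite_mem]
  rw [rankOneUpdate, hnum, hden, sq, ← mul_assoc, mul_comm b, mul_div_mul_right _ _ hb]

omit [Fintype κ] in
lemma sum_le_card_sub_one {x : κ → ℝ} (hx : ∀ j, x j = 0 ∨ x j = 1) {J : Finset κ} {j₀ : κ}
    (hj₀ : j₀ ∈ J) (hx₀ : x j₀ ≠ 1) : ∑ j ∈ J, x j ≤ #J - 1 := by
  rw [← add_sum_erase J x hj₀, (hx j₀).resolve_right hx₀, zero_add,
    ← Nat.cast_pred (card_pos.mpr ⟨j₀, hj₀⟩), ← card_erase_of_mem hj₀]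
  simpa using sum_le_card_nsmul (J.erase j₀) x 1 fun j _ =>
    (hx j).elim (fun h => h.le.trans zero_le_one) (·.le)

lemma rankOneUpdate_of_forall_eq_one {x : κ → ℝ} {J : Finset κ} (hJ : J.Nonempty)
    (hx : ∀ j ∈ J, x j = 1) (d : ℝ) {b : ℝ} (hb : 0 < b) :
    rankOneUpdate (fun j => (1 + d) * x j - d) (fun j => if j ∈ J then b else 0) = b⁻¹ := by
  have hJ' : (0 : ℝ) < #J := by exact_mod_cast hJ.card_pos
  rw [rankOneUpdate_ite_mem _ _ hb.ne',
    sum_congr rfl fun j hj => by rw [hx j hj, mul_one, add_sub_cancel_right], sum_const, nsmul_eq_mul, mul_one, div_mul_cancel_left₀ hJ'.ne', max_eq_right (by positivity)]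

lemma rankOneUpdate_of_exists_ne_one {x : κ → ℝ} (hx : ∀ j, x j = 0 ∨ x j = 1) {J : Finset κ}
    (hJx : ∃ j ∈ J, x j ≠ 1) {d : ℝ} (hd : (#J : ℝ) - 1 ≤ d) {b : ℝ} (hb : 0 < b) :
    rankOneUpdate (fun j => (1 + d) * x j - d) (fun j => if j ∈ J then b else 0) = 0 := by
  obtain ⟨j₀, hj₀, hx₀⟩ := hJx
  have hsum := sum_le_card_sub_one hx hj₀ hx₀
  rw [rankOneUpdate_ite_mem _ _ hb.ne', max_eq_left]
  apply div_nonpos_of_nonpos_of_nonneg _ (by positivity)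
  rw [sum_sub_distrib, ← mul_sum, sum_const, nsmul_eq_mul]
  nlinarith

lemma forall_eq_rankOneUpdate_iff (M : ι → κ → ℝ) (hM : ∀ i j, M i j = 0 ∨ M i j = 1) {d : ℝ}
    (hd : (Fintype.card κ : ℝ) - 1 ≤ d) {v : ι → ℝ} {w : κ → ℝ} {I : Finset ι} {J : Finset κ}
    {a b : ℝ} (hv : ∀ i, v i = if i ∈ I then a else 0) (hw : ∀ j, w j = if j ∈ J then b else 0)
    (hJ : J.Nonempty) (hIJ : ∀ i ∈ I, ∀ j ∈ J, M i j = 1) (hb : 0 < b) (hab : a * b = 1) :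
    (∀ i, v i = rankOneUpdate (fun j => (1 + d) * M i j - d) w) ↔
      ¬∃ i, v i = 0 ∧ ∀ j, w j ≠ 0 → M i j = 1 := by
  obtain rfl : v = _ := funext hv
  obtain rfl : w = _ := funext hw
  have ha : a = b⁻¹ := eq_inv_of_mul_eq_one_left hab
  have hdJ : (#J : ℝ) - 1 ≤ d := le_trans (by gcongr; exact card_le_univ J) hd
  have hupdate : ∀ i, rankOneUpdate (fun j => (1 + d) * M i j - d)
      (fun j => if j ∈ J then b else 0) = if ∀ j ∈ J, M i j = 1 then b⁻¹ else 0 := by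
    intro i
    split_ifs with hi
    · exact rankOneUpdate_of_forall_eq_one hJ hi d hb
    · push Not at hi
      exact rankOneUpdate_of_exists_ne_one (hM i) hi hdJ hb
  simp only [hupdate, ne_eq, ite_eq_right_iff, ha, inv_eq_zero, hb.ne', imp_false, not_not]
  refine ⟨fun h ⟨i, hi, hfull⟩ => ?_, fun h i => ?_⟩
  · have := h i
    rw [if_neg hi, if_pos hfull] at this
    exact inv_ne_zero hb.ne' this.symm
  · by_cases hi : i ∈ I
    · rw [if_pos hi, if_pos (hIJ i hi)]
    · rw [if_neg hi, if_neg fun hfull => h ⟨i, hi, hfull⟩]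

end

theorem stmt_3_general (m n : ℕ) (Mb : Fin m → Fin n → ℝ)
    (hbin : ∀ i j, Mb i j = 0 ∨ Mb i j = 1)
    (d : ℝ) (hd : (max m n : ℝ) - 1 < d)
    (Md : Fin m → Fin n → ℝ) (hMd : ∀ i j, Md i j = (1 + d) * Mb i j - d)
    (v : Fin m → ℝ) (w : Fin n → ℝ)
    (hv : ∀ i, 0 ≤ v i) (hv0 : v ≠ 0) (hw0 : w ≠ 0)
    (hfeas : ∀ i j, (v i * w j = 0 ∨ v i * w j = 1) ∧ v i * w j ≤ Mb i j) :
    ((∀ i, v i = max 0 ((∑ j, Md i j * w j) / (∑ j, (w j) ^ 2))) ∧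
     (∀ j, w j = max 0 ((∑ i, v i * Md i j) / (∑ i, (v i) ^ 2))))
    ↔
    ((¬ ∃ i, v i = 0 ∧ ∀ j, w j ≠ 0 → Mb i j = 1) ∧
     (¬ ∃ j, w j = 0 ∧ ∀ i, v i ≠ 0 → Mb i j = 1)) := by
  classical
  obtain ⟨i₀, hi₀⟩ := Function.ne_iff.mp hv0
  obtain ⟨j₀, hj₀⟩ := Function.ne_iff.mp hw0
  have hvw : ∀ i j, v i ≠ 0 → w j ≠ 0 → v i * w j = 1 := fun i j hi hj =>
    (hfeas i j).1.resolve_left (mul_ne_zero hi hj)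
  have hwv : ∀ j i, w j ≠ 0 → v i ≠ 0 → w j * v i = 1 := fun j i hj hi =>
    mul_comm (v i) (w j) ▸ hvw i j hi hj
  have hM : ∀ i, v i ≠ 0 → ∀ j, w j ≠ 0 → Mb i j = 1 := fun i hi j hj =>
    (hbin i j).resolve_left fun h => by linarith [hvw i j hi hj ▸ h ▸ (hfeas i j).2]
  have ha : 0 < v i₀ := (hv i₀).lt_of_ne' hi₀
  have hb : 0 < w j₀ := pos_of_mul_pos_right (hvw i₀ j₀ hi₀ hj₀ ▸ one_pos) ha.le
  have hdm : (m : ℝ) - 1 ≤ d := by linarith [le_max_left (m : ℝ) n]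
  have hdn : (n : ℝ) - 1 ≤ d := by linarith [le_max_right (m : ℝ) n]
  simp only [hMd, mul_comm (v _)]
  exact and_congr
    (forall_eq_rankOneUpdate_iff Mb hbin (by simpa using hdn) (eq_ite_of_mul_eq_one hvw hi₀ hj₀)
      (eq_ite_of_mul_eq_one hwv hj₀ hi₀) ⟨j₀, by simpa⟩ (by simpa using hM) hb (hvw _ _ hi₀ hj₀))
    (forall_eq_rankOneUpdate_iff (fun j i => Mb i j) (fun j i => hbin i j) (by simpa using hdm)
      (eq_ite_of_mul_eq_one hwv hj₀ hi₀) (eq_ite_of_mul_eq_one hvw hi₀ hj₀) ⟨i₀, by simpa⟩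
      (by simpa using fun j hj i hi => hM i hi j hj) ha (hwv _ _ hj₀ hi₀))

/-- For d > max(m,n) - 1, a feasible biclique solution (v,w) (vwᵀ binary,
vwᵀ ≤ M_b) is a nontrivial stationary point of the rank-one NF problem for
M_d = (1+d)M_b - d·J if and only if the corresponding biclique is maximal. -/
theorem stmt_3 (m n : ℕ) (Mb : Fin m → Fin n → ℝ)
    (hbin : ∀ i j, Mb i j = 0 ∨ Mb i j = 1)
    (hrow : ∀ i, ∃ j, Mb i j = 1) (hcol : ∀ j, ∃ i, Mb i j = 1)
    (d : ℝ) (hd : (max m n : ℝ) - 1 < d)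
    (Md : Fin m → Fin n → ℝ) (hMd : ∀ i j, Md i j = (1 + d) * Mb i j - d)
    (v : Fin m → ℝ) (w : Fin n → ℝ)
    (hv : ∀ i, 0 ≤ v i) (hw : ∀ j, 0 ≤ w j) (hv0 : v ≠ 0) (hw0 : w ≠ 0)
    (hfeas : ∀ i j, (v i * w j = 0 ∨ v i * w j = 1) ∧ v i * w j ≤ Mb i j) :
    ((∀ i, v i = max 0 ((∑ j, Md i j * w j) / (∑ j, (w j) ^ 2))) ∧
     (∀ j, w j = max 0 ((∑ i, v i * Md i j) / (∑ i, (v i) ^ 2))))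
    ↔
    ((¬ ∃ i, v i = 0 ∧ ∀ j, w j ≠ 0 → Mb i j = 1) ∧
     (¬ ∃ j, w j = 0 ∧ ∀ i, v i ≠ 0 → Mb i j = 1)) :=
  stmt_3_general m n Mb hbin d hd Md hMd v w hv hv0 hw0 hfeas
end

section
/- Let M_d = (1+d)M_b - d·J with M_b ∈ {0,1}^{m×n} having |E| ones, and suppose (v,w), v ∈ ℝᵐ₊, w ∈ ℝⁿ₊, both nonzero, satisfy the stationarity conditions v = max(0, M_d wᵀ/||w||₂²) and wᵀ = max(0, vᵀM_d/||v||₂²). Then ||v||₂ · ||w||₂ ≤ √|E|. -/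
/-!
Multiplying the first stationarity condition by `vᵢ` and summing gives
`vᵀ M_d w = ‖v‖² ‖w‖²`. Since `M_d ≤ M_b` entrywise and `v, w ≥ 0`, this is at most
`⟨M_b, v wᵀ⟩_F ≤ ‖M_b‖_F ‖v‖ ‖w‖` by Cauchy–Schwarz, and `‖M_b‖_F² = |E|` because `M_b` is
a 0/1 matrix. Dividing `(‖v‖ ‖w‖)² ≤ √|E| · ‖v‖ ‖w‖` by `‖v‖ ‖w‖` gives the claim.
-/

open Finset

lemma mul_eq_sq_mul_of_eq_max_zero_div {x a b : ℝ} (hx : x = max 0 (a / b)) :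
    x * a = x ^ 2 * b := by
  rcases max_choice 0 (a / b) with h | h <;> rw [h] at hx <;> subst hx
  · ring
  · rcases eq_or_ne b 0 with rfl | hb
    · simp
    · field_simp

lemma shifted_le_self_of_binary {b d : ℝ} (hb : b = 0 ∨ b = 1) (hd : 0 ≤ d) :
    (1 + d) * b - d ≤ b := by
  rcases hb with rfl | rfl <;> linarith

lemma sq_eq_self_of_binary {b : ℝ} (hb : b = 0 ∨ b = 1) : b ^ 2 = b := by
  rcases hb with rfl | rfl <;> norm_num

section Bilinear

variable {ι κ : Type*} [Fintype ι] [Fintype κ]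

lemma sum_mul_sum_eq_of_stationary (M : ι → κ → ℝ) (v : ι → ℝ) (w : κ → ℝ)
    (hsv : ∀ i, v i = max 0 ((∑ j, M i j * w j) / ∑ j, w j ^ 2)) :
    ∑ i, v i * ∑ j, M i j * w j = (∑ i, v i ^ 2) * ∑ j, w j ^ 2 := by
  rw [sum_mul]
  exact sum_congr rfl fun i _ => mul_eq_sq_mul_of_eq_max_zero_div (hsv i)

lemma sum_mul_sum_mono {M N : ι → κ → ℝ} (hMN : ∀ i j, M i j ≤ N i j) {v : ι → ℝ} {w : κ → ℝ}
    (hv : ∀ i, 0 ≤ v i) (hw : ∀ j, 0 ≤ w j) :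
    ∑ i, v i * ∑ j, M i j * w j ≤ ∑ i, v i * ∑ j, N i j * w j :=
  sum_le_sum fun i _ => mul_le_mul_of_nonneg_left
    (sum_le_sum fun j _ => mul_le_mul_of_nonneg_right (hMN i j) (hw j)) (hv i)

lemma sum_mul_sum_le_sqrt_mul (N : ι → κ → ℝ) (v : ι → ℝ) (w : κ → ℝ) :
    ∑ i, v i * ∑ j, N i j * w j
      ≤ √(∑ i, ∑ j, N i j ^ 2) * (√(∑ i, v i ^ 2) * √(∑ j, w j ^ 2)) := by
  have hpair : ∑ i, v i * ∑ j, N i j * w j = ∑ p : ι × κ, N p.1 p.2 * (v p.1 * w p.2) := by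
    rw [Fintype.sum_prod_type]
    exact sum_congr rfl fun i _ => by rw [mul_sum]; exact sum_congr rfl fun j _ => by ring
  have hrankOne : ∑ p : ι × κ, (v p.1 * w p.2) ^ 2 = (∑ i, v i ^ 2) * ∑ j, w j ^ 2 := by
    simp only [Fintype.sum_prod_type, mul_pow, sum_mul_sum]
  calc ∑ i, v i * ∑ j, N i j * w j
      = ∑ p : ι × κ, N p.1 p.2 * (v p.1 * w p.2) := hpair
    _ ≤ √(∑ p : ι × κ, N p.1 p.2 ^ 2) * √(∑ p : ι × κ, (v p.1 * w p.2) ^ 2) :=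
      Real.sum_mul_le_sqrt_mul_sqrt _ _ _
    _ = √(∑ i, ∑ j, N i j ^ 2) * (√(∑ i, v i ^ 2) * √(∑ j, w j ^ 2)) := by
      rw [hrankOne, Real.sqrt_mul (sum_nonneg fun i _ => sq_nonneg _), Fintype.sum_prod_type]

end Bilinear

theorem stmt_4_general (m n : ℕ) (Mb : Fin m → Fin n → ℝ)
    (hbin : ∀ i j, Mb i j = 0 ∨ Mb i j = 1)
    (d : ℝ) (hd0 : 0 < d)
    (Md : Fin m → Fin n → ℝ) (hMd : ∀ i j, Md i j = (1 + d) * Mb i j - d)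
    (v : Fin m → ℝ) (w : Fin n → ℝ)
    (hv : ∀ i, 0 ≤ v i) (hw : ∀ j, 0 ≤ w j)
    (hsv : ∀ i, v i = max 0 ((∑ j, Md i j * w j) / (∑ j, (w j) ^ 2))) :
    Real.sqrt (∑ i, (v i) ^ 2) * Real.sqrt (∑ j, (w j) ^ 2)
      ≤ Real.sqrt (∑ i, ∑ j, Mb i j) := by
  set x := √(∑ i, v i ^ 2) * √(∑ j, w j ^ 2)
  have hMdMb : ∀ i j, Md i j ≤ Mb i j := fun i j =>
    (hMd i j).trans_le (shifted_le_self_of_binary (hbin i j) hd0.le)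
  have hx_sq : x ^ 2 = (∑ i, v i ^ 2) * ∑ j, w j ^ 2 := by
    rw [mul_pow, Real.sq_sqrt (sum_nonneg fun i _ => sq_nonneg _),
      Real.sq_sqrt (sum_nonneg fun j _ => sq_nonneg _)]
  have hMb_sq : ∑ i, ∑ j, Mb i j ^ 2 = ∑ i, ∑ j, Mb i j := by
    simp only [fun i j => sq_eq_self_of_binary (hbin i j)]
  have hx_sq_le : x ^ 2 ≤ √(∑ i, ∑ j, Mb i j) * x :=
    calc x ^ 2 = ∑ i, v i * ∑ j, Md i j * w j := sum_mul_sum_eq_of_stationary Md v w hsv ▸ hx_sq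
      _ ≤ ∑ i, v i * ∑ j, Mb i j * w j := sum_mul_sum_mono hMdMb hv hw
      _ ≤ √(∑ i, ∑ j, Mb i j) * x := hMb_sq ▸ sum_mul_sum_le_sqrt_mul Mb v w
  have hx0 : 0 ≤ x := by positivity
  nlinarith [Real.sqrt_nonneg (∑ i, ∑ j, Mb i j)]

/-- Any nontrivial stationary point (v,w) of the rank-one NF problem for
M_d satisfies ‖v‖₂·‖w‖₂ ≤ √|E|. -/
theorem stmt_4 (m n : ℕ) (Mb : Fin m → Fin n → ℝ)
    (hbin : ∀ i j, Mb i j = 0 ∨ Mb i j = 1)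
    (d : ℝ) (hd0 : 0 < d)
    (Md : Fin m → Fin n → ℝ) (hMd : ∀ i j, Md i j = (1 + d) * Mb i j - d)
    (v : Fin m → ℝ) (w : Fin n → ℝ)
    (hv : ∀ i, 0 ≤ v i) (hw : ∀ j, 0 ≤ w j) (hv0 : v ≠ 0) (hw0 : w ≠ 0)
    (hsv : ∀ i, v i = max 0 ((∑ j, Md i j * w j) / (∑ j, (w j) ^ 2)))
    (hsw : ∀ j, w j = max 0 ((∑ i, v i * Md i j) / (∑ i, (v i) ^ 2))) :
    Real.sqrt (∑ i, (v i) ^ 2) * Real.sqrt (∑ j, (w j) ^ 2)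
      ≤ Real.sqrt (∑ i, ∑ j, Mb i j) :=
  stmt_4_general m n Mb hbin d hd0 Md hMd v w hv hw hsv
end

section
/- Let M_d = (1+d)M_b - d·J as above and let (v,w) be a nontrivial stationary point of the rank-one nonnegative factorization of M_d (i.e., v = max(0, M_d wᵀ/||w||₂²), wᵀ = max(0, vᵀM_d/||v||₂²), v,w ≥ 0 nonzero). If M_d(i,j) = -d and v_i w_j > 0 for some (i,j), then 0 < v_i < ||v||₁/(d+1) and 0 < w_j < ||w||₁/(d+1). -/
/-!
Since `M_b` is binary, every entry of `M_d` is at most `1`. At a stationary point with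
`v_i > 0`, the stationarity equation for `v_i` forces `(M_d wᵀ)_i > 0`; bounding the entries of
row `i` by `1`, except `M_d(i,j) = -d`, gives `(M_d wᵀ)_i ≤ ‖w‖₁ - (1 + d) w_j`, hence
`w_j < ‖w‖₁/(d+1)`. The bound on `v_i` is the same argument applied to column `j`.
-/

open Finset

theorem pos_of_lt_max_zero_div {a b : ℝ} (hb : 0 ≤ b) (h : 0 < max 0 (a / b)) : 0 < a := by
  have hab : 0 < a / b := (lt_max_iff.mp h).resolve_left (lt_irrefl 0)
  exact ((div_pos_iff.mp hab).resolve_right fun hneg => hb.not_gt hneg.2).1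

section WeightedSum

variable {ι : Type*} [Fintype ι] {c x : ι → ℝ} {j : ι} {d : ℝ}

theorem sum_mul_le_sum_sub_of_le_one (hx : ∀ k, 0 ≤ x k) (hc : ∀ k, c k ≤ 1) (hcj : c j = -d) :
    ∑ k, c k * x k ≤ ∑ k, x k - (1 + d) * x j := by
  classical
  rw [← add_sum_erase _ _ (mem_univ j), ← add_sum_erase _ _ (mem_univ j), hcj]
  have hrest : ∑ k ∈ univ.erase j, c k * x k ≤ ∑ k ∈ univ.erase j, x k :=
    sum_le_sum fun k _ => mul_le_of_le_one_left (hx k) (hc k)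
  linarith

theorem lt_sum_div_of_sum_mul_pos (hx : ∀ k, 0 ≤ x k) (hc : ∀ k, c k ≤ 1) (hcj : c j = -d)
    (hd : 0 < d + 1) (h : 0 < ∑ k, c k * x k) : x j < (∑ k, x k) / (d + 1) := by
  rw [lt_div_iff₀ hd]
  linarith [sum_mul_le_sum_sub_of_le_one hx hc hcj]

end WeightedSum

theorem stmt_5_general (m n : ℕ) (Mb : Fin m → Fin n → ℝ)
    (hbin : ∀ i j, Mb i j = 0 ∨ Mb i j = 1)
    (d : ℝ) (hd0 : 0 < d)
    (Md : Fin m → Fin n → ℝ) (hMd : ∀ i j, Md i j = (1 + d) * Mb i j - d)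
    (v : Fin m → ℝ) (w : Fin n → ℝ)
    (hv : ∀ i, 0 ≤ v i) (hw : ∀ j, 0 ≤ w j)
    (hsv : ∀ i, v i = max 0 ((∑ j, Md i j * w j) / (∑ j, (w j) ^ 2)))
    (hsw : ∀ j, w j = max 0 ((∑ i, v i * Md i j) / (∑ i, (v i) ^ 2)))
    (i : Fin m) (j : Fin n) (hMdij : Md i j = -d) (hpos : 0 < v i * w j) :
    (0 < v i ∧ v i < (∑ k, v k) / (d + 1)) ∧
    (0 < w j ∧ w j < (∑ k, w k) / (d + 1)) := by
  have hvi : 0 < v i := pos_of_mul_pos_left hpos (hw j)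
  have hwj : 0 < w j := pos_of_mul_pos_right hpos (hv i)
  have hMd_le : ∀ a b, Md a b ≤ 1 := fun a b => by
    rcases hbin a b with h | h <;> rw [hMd, h] <;> linarith
  have hrow : 0 < ∑ k, Md i k * w k := pos_of_lt_max_zero_div (by positivity) (hsv i ▸ hvi)
  have hcol : 0 < ∑ k, Md k j * v k := by
    simp_rw [mul_comm (Md _ j)]
    exact pos_of_lt_max_zero_div (by positivity) (hsw j ▸ hwj)
  have hd1 : 0 < d + 1 := by linarith
  exact ⟨⟨hvi, lt_sum_div_of_sum_mul_pos hv (hMd_le · j) hMdij hd1 hcol⟩,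
    ⟨hwj, lt_sum_div_of_sum_mul_pos hw (hMd_le i) hMdij hd1 hrow⟩⟩

/-- If (v,w) is a nontrivial stationary point of the rank-one NF of M_d,
M_d(i,j) = -d and v_i w_j > 0, then 0 < v_i < ‖v‖₁/(d+1) and 0 < w_j < ‖w‖₁/(d+1). -/
theorem stmt_5 (m n : ℕ) (Mb : Fin m → Fin n → ℝ)
    (hbin : ∀ i j, Mb i j = 0 ∨ Mb i j = 1)
    (d : ℝ) (hd0 : 0 < d)
    (Md : Fin m → Fin n → ℝ) (hMd : ∀ i j, Md i j = (1 + d) * Mb i j - d)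
    (v : Fin m → ℝ) (w : Fin n → ℝ)
    (hv : ∀ i, 0 ≤ v i) (hw : ∀ j, 0 ≤ w j) (hv0 : v ≠ 0) (hw0 : w ≠ 0)
    (hsv : ∀ i, v i = max 0 ((∑ j, Md i j * w j) / (∑ j, (w j) ^ 2)))
    (hsw : ∀ j, w j = max 0 ((∑ i, v i * Md i j) / (∑ i, (v i) ^ 2)))
    (i : Fin m) (j : Fin n) (hMdij : Md i j = -d) (hpos : 0 < v i * w j) :
    (0 < v i ∧ v i < (∑ k, v k) / (d + 1)) ∧
    (0 < w j ∧ w j < (∑ k, w k) / (d + 1)) :=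
  stmt_5_general m n Mb hbin d hd0 Md hMd v w hv hw hsv hsw i j hMdij hpos
end

section
/- Fix a nonnegative row vector w ∈ ℝⁿ₊ and a real matrix M ∈ ℝ^{m×n} with decomposition M = P - N, P, N ≥ 0. For v ∈ ℝᵐ with v > 0 entrywise, define the multiplicative update v' with entries v'_i = v_i · (P wᵀ)_i / ((v wwᵀ)_i + (N wᵀ)_i) (assuming denominators positive). Then ||M - v' w||_F ≤ ||M - v w||_F. -/
/-!
The update is a majorize–minimize step, row by row. On row `i` the error
`u ↦ ∑ j, (M i j - u * w j) ^ 2` is the quadratic `S u² - 2 b u` plus a constant, where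
`S = ∑ w_j²` and `b = ∑ M_ij w_j`. Replacing its curvature `S` by the larger
`K = S + (N wᵀ)_i / v_i` gives a quadratic majorant touching it at `v_i`, and the minimizer
`v_i - (S v_i - b) / K` of that majorant is exactly `v'_i`; hence the error cannot increase.
-/

open Finset

lemma sum_sub_mul_sq {ι : Type*} [Fintype ι] (a w : ι → ℝ) (u : ℝ) :
    ∑ j, (a j - u * w j) ^ 2
      = ∑ j, a j ^ 2 - 2 * u * ∑ j, a j * w j + u ^ 2 * ∑ j, w j ^ 2 := by
  rw [mul_sum, mul_sum, ← sum_sub_distrib, ← sum_add_distrib]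
  exact sum_congr rfl fun j _ => by ring

lemma quadratic_gradient_step_le {S K b v : ℝ} (hSK : S ≤ K) (hK : 0 < K) :
    S * (v - (S * v - b) / K) ^ 2 - 2 * b * (v - (S * v - b) / K)
      ≤ S * v ^ 2 - 2 * b * v := by
  have hdiff : S * v ^ 2 - 2 * b * v
      - (S * (v - (S * v - b) / K) ^ 2 - 2 * b * (v - (S * v - b) / K))
      = (S * v - b) ^ 2 * (2 * K - S) / K ^ 2 := by
    field_simp; ring
  have : 0 ≤ (S * v - b) ^ 2 * (2 * K - S) / K ^ 2 := by
    have : 0 ≤ 2 * K - S := by linarith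
    positivity
  linarith

lemma mul_update_eq_gradient_step {S B b v : ℝ} (hv : 0 < v) (hD : 0 < v * S + B) :
    v * (b + B) / (v * S + B) = v - (S * v - b) / ((v * S + B) / v) := by
  field_simp; ring

lemma mul_update_row_le {ι : Type*} [Fintype ι] (a p n w : ι → ℝ)
    (ha : ∀ j, a j = p j - n j) (hn : ∀ j, 0 ≤ n j) (hw : ∀ j, 0 ≤ w j)
    {v : ℝ} (hv : 0 < v) (hD : 0 < v * ∑ j, w j ^ 2 + ∑ j, n j * w j) :
    ∑ j, (a j - v * (∑ j, p j * w j) / (v * ∑ j, w j ^ 2 + ∑ j, n j * w j) * w j) ^ 2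
      ≤ ∑ j, (a j - v * w j) ^ 2 := by
  set S := ∑ j, w j ^ 2
  set B := ∑ j, n j * w j
  set b := ∑ j, a j * w j
  have hp : ∑ j, p j * w j = b + B := by
    simp only [b, B, ← sum_add_distrib, ha]
    exact sum_congr rfl fun j _ => by ring
  have hB : 0 ≤ B := sum_nonneg fun j _ => mul_nonneg (hn j) (hw j)
  have hSK : S ≤ (v * S + B) / v := by
    rw [le_div_iff₀ hv]; linarith
  rw [sum_sub_mul_sq, sum_sub_mul_sq, hp, mul_update_eq_gradient_step hv hD]
  have := quadratic_gradient_step_le (b := b) (v := v) hSK (div_pos hD hv)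
  linarith

theorem stmt_6_general (m n : ℕ) (M P N : Fin m → Fin n → ℝ)
    (w : Fin n → ℝ) (hw : ∀ j, 0 ≤ w j)
    (hN : ∀ i j, 0 ≤ N i j)
    (hM : ∀ i j, M i j = P i j - N i j)
    (v : Fin m → ℝ) (hv : ∀ i, 0 < v i)
    (hden : ∀ i, 0 < v i * (∑ j, (w j) ^ 2) + ∑ j, N i j * w j)
    (v' : Fin m → ℝ)
    (hv' : ∀ i, v' i = v i * (∑ j, P i j * w j)
        / (v i * (∑ j, (w j) ^ 2) + ∑ j, N i j * w j)) :
    ∑ i, ∑ j, (M i j - v' i * w j) ^ 2 ≤ ∑ i, ∑ j, (M i j - v i * w j) ^ 2 := by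
  refine sum_le_sum fun i _ => ?_
  rw [hv' i]
  exact mul_update_row_le (M i) (P i) (N i) w (hM i) (hN i) hw (hv i) (hden i)

/-- The generalized multiplicative update for a splitting M = P - N,
P, N ≥ 0, does not increase the Frobenius error ‖M - vw‖_F. -/
theorem stmt_6 (m n : ℕ) (M P N : Fin m → Fin n → ℝ)
    (w : Fin n → ℝ) (hw : ∀ j, 0 ≤ w j)
    (hP : ∀ i j, 0 ≤ P i j) (hN : ∀ i j, 0 ≤ N i j)
    (hM : ∀ i j, M i j = P i j - N i j)
    (v : Fin m → ℝ) (hv : ∀ i, 0 < v i)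
    (hden : ∀ i, 0 < v i * (∑ j, (w j) ^ 2) + ∑ j, N i j * w j)
    (v' : Fin m → ℝ)
    (hv' : ∀ i, v' i = v i * (∑ j, P i j * w j)
        / (v i * (∑ j, (w j) ^ 2) + ∑ j, N i j * w j)) :
    ∑ i, ∑ j, (M i j - v' i * w j) ^ 2 ≤ ∑ i, ∑ j, (M i j - v i * w j) ^ 2 :=
  stmt_6_general m n M P N w hw hN hM v hv hden v' hv'
end

section
/- Let M ∈ ℝ^{m×n} be any real matrix, with positive and negative parts M₊ = max(0,M), M₋ = max(0,-M). Let P, N ≥ 0 be any other decomposition M = P - N. Fix w ∈ ℝⁿ₊ and v ∈ ℝᵐ₊, and define v₁ = v ∘ (M₊wᵀ)/(vwwᵀ + M₋wᵀ) and v₂ = v ∘ (Pwᵀ)/(vwwᵀ + Nwᵀ) (entrywise operations, denominators assumed positive). Then ||M - v₁w||_F ≤ ||M - v₂w||_F ≤ ||M - vw||_F. -/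
/-! Row by row, `t ↦ ∑ⱼ (Mᵢⱼ - t wⱼ)²` is a quadratic minimised at `t* = Mᵢ·w / ‖w‖²`, and
every multiplicative update `v p / (v ‖w‖² + q)` with `p - q = Mᵢ·w` lies on the segment from
`t*` to `v`, at relative position `q / (v ‖w‖² + q)`. This position is increasing in `q`, and
`q = M₋ w` is the smallest `q` any splitting `M = P - N` with `P, N ≥ 0` can give. -/

open Finset

/-- The multiplicative update `v ∘ (P wᵀ) / (v w wᵀ + N wᵀ)` of one entry, with `e = w wᵀ`,
`p = (P wᵀ)ᵢ` and `q = (N wᵀ)ᵢ`. -/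
noncomputable def mulUpdate (v e p q : ℝ) : ℝ := v * p / (v * e + q)

theorem mulUpdate_sub_div_eq {v e p q s : ℝ} (hpq : p - q = s) (he : e ≠ 0)
    (hden : v * e + q ≠ 0) :
    mulUpdate v e p q - s / e = q / (v * e + q) * (v - s / e) := by
  unfold mulUpdate
  rw [← hpq]
  field_simp
  ring

theorem div_add_le_div_add_of_le {x q₁ q₂ : ℝ} (hx : 0 ≤ x) (hq : q₁ ≤ q₂)
    (hden : 0 < x + q₁) : q₁ / (x + q₁) ≤ q₂ / (x + q₂) := by
  rw [div_le_div_iff₀ hden (by linarith)]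
  nlinarith [mul_nonneg hx (sub_nonneg.mpr hq)]

theorem sq_mulUpdate_sub_div_le {v e p₁ q₁ p₂ q₂ s : ℝ} (hv : 0 ≤ v) (he : 0 < e)
    (hpq₁ : p₁ - q₁ = s) (hpq₂ : p₂ - q₂ = s) (hq₁ : 0 ≤ q₁) (hq : q₁ ≤ q₂)
    (hden : 0 < v * e + q₁) :
    (mulUpdate v e p₁ q₁ - s / e) ^ 2 ≤ (mulUpdate v e p₂ q₂ - s / e) ^ 2 ∧
      (mulUpdate v e p₂ q₂ - s / e) ^ 2 ≤ (v - s / e) ^ 2 := by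
  have hve : 0 ≤ v * e := mul_nonneg hv he.le
  have hden₂ : 0 < v * e + q₂ := by linarith
  have hratio₁ : 0 ≤ q₁ / (v * e + q₁) := div_nonneg hq₁ hden.le
  have hratio : q₁ / (v * e + q₁) ≤ q₂ / (v * e + q₂) := div_add_le_div_add_of_le hve hq hden
  have hratio₂ : q₂ / (v * e + q₂) ≤ 1 := (div_le_one hden₂).mpr (by linarith)
  rw [mulUpdate_sub_div_eq hpq₁ he.ne' hden.ne', mulUpdate_sub_div_eq hpq₂ he.ne' hden₂.ne',
    mul_pow, mul_pow]
  constructor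
  · gcongr
  · calc (q₂ / (v * e + q₂)) ^ 2 * (v - s / e) ^ 2 ≤ 1 ^ 2 * (v - s / e) ^ 2 := by
          gcongr; exact hratio₁.trans hratio
      _ = (v - s / e) ^ 2 := by rw [one_pow, one_mul]

section RowObjective

variable {ι : Type*} [Fintype ι]

theorem sum_sq_sub_mul_eq_add (r w : ι → ℝ) {c : ℝ} (hc : c * ∑ j, w j ^ 2 = ∑ j, r j * w j)
    (t : ℝ) :
    ∑ j, (r j - t * w j) ^ 2 = ∑ j, (r j - c * w j) ^ 2 + (t - c) ^ 2 * ∑ j, w j ^ 2 := by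
  have hcross : ∑ j, (r j - c * w j) * w j = 0 := by
    simp only [sub_mul, sum_sub_distrib, mul_assoc, ← mul_sum, ← pow_two, hc, sub_self]
  calc ∑ j, (r j - t * w j) ^ 2
      = ∑ j, ((r j - c * w j) ^ 2 - 2 * (t - c) * ((r j - c * w j) * w j)
          + (t - c) ^ 2 * w j ^ 2) := sum_congr rfl fun j _ => by ring
    _ = ∑ j, (r j - c * w j) ^ 2 + (t - c) ^ 2 * ∑ j, w j ^ 2 := by
      rw [sum_add_distrib, sum_sub_distrib, ← mul_sum, ← mul_sum, hcross]; ring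

theorem sum_sq_sub_mul_le_of_sq_sub_le (r w : ι → ℝ) {c t₁ t₂ : ℝ}
    (hc : c * ∑ j, w j ^ 2 = ∑ j, r j * w j) (h : (t₁ - c) ^ 2 ≤ (t₂ - c) ^ 2) :
    ∑ j, (r j - t₁ * w j) ^ 2 ≤ ∑ j, (r j - t₂ * w j) ^ 2 := by
  rw [sum_sq_sub_mul_eq_add r w hc t₁, sum_sq_sub_mul_eq_add r w hc t₂]
  gcongr

theorem sum_sq_sub_mulUpdate_le (r w : ι → ℝ) {v p₁ q₁ p₂ q₂ : ℝ} (hv : 0 ≤ v)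
    (he : 0 < ∑ j, w j ^ 2) (hpq₁ : p₁ - q₁ = ∑ j, r j * w j)
    (hpq₂ : p₂ - q₂ = ∑ j, r j * w j) (hq₁ : 0 ≤ q₁) (hq : q₁ ≤ q₂)
    (hden : 0 < v * ∑ j, w j ^ 2 + q₁) :
    ∑ j, (r j - mulUpdate v (∑ j, w j ^ 2) p₁ q₁ * w j) ^ 2
        ≤ ∑ j, (r j - mulUpdate v (∑ j, w j ^ 2) p₂ q₂ * w j) ^ 2 ∧
      ∑ j, (r j - mulUpdate v (∑ j, w j ^ 2) p₂ q₂ * w j) ^ 2 ≤ ∑ j, (r j - v * w j) ^ 2 := by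
  have hc : (∑ j, r j * w j) / (∑ j, w j ^ 2) * ∑ j, w j ^ 2 = ∑ j, r j * w j :=
    div_mul_cancel₀ _ he.ne'
  obtain ⟨h₁, h₂⟩ := sq_mulUpdate_sub_div_le hv he hpq₁ hpq₂ hq₁ hq hden
  exact ⟨sum_sq_sub_mul_le_of_sq_sub_le r w hc h₁, sum_sq_sub_mul_le_of_sq_sub_le r w hc h₂⟩

theorem sum_sq_sub_mulUpdate_posPart_le (r p q w : ι → ℝ) (hp : ∀ j, 0 ≤ p j)
    (hq : ∀ j, 0 ≤ q j) (hr : ∀ j, r j = p j - q j) (hw : ∀ j, 0 ≤ w j) {v : ℝ} (hv : 0 ≤ v)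
    (hden : 0 < v * (∑ j, w j ^ 2) + ∑ j, max 0 (-r j) * w j) :
    ∑ j, (r j - mulUpdate v (∑ j, w j ^ 2) (∑ j, max 0 (r j) * w j)
          (∑ j, max 0 (-r j) * w j) * w j) ^ 2
        ≤ ∑ j, (r j - mulUpdate v (∑ j, w j ^ 2) (∑ j, p j * w j) (∑ j, q j * w j) * w j) ^ 2 ∧
      ∑ j, (r j - mulUpdate v (∑ j, w j ^ 2) (∑ j, p j * w j) (∑ j, q j * w j) * w j) ^ 2
        ≤ ∑ j, (r j - v * w j) ^ 2 := by
  have he : 0 < ∑ j, w j ^ 2 := by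
    refine (sum_nonneg fun j _ => sq_nonneg (w j)).lt_of_ne fun he => ?_
    have hw0 : ∀ j, w j = 0 := fun j =>
      pow_eq_zero_iff two_ne_zero |>.mp ((sum_eq_zero_iff_of_nonneg fun j _ =>
        sq_nonneg (w j)).mp he.symm j (mem_univ j))
    simp [hw0] at hden
  have hpq₁ : ∑ j, max 0 (r j) * w j - ∑ j, max 0 (-r j) * w j = ∑ j, r j * w j := by
    rw [← sum_sub_distrib]
    exact sum_congr rfl fun j _ => by
      rw [← sub_mul, max_comm 0 (r j), max_comm 0 (-r j), max_zero_sub_max_neg_zero_eq_self]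
  have hpq₂ : ∑ j, p j * w j - ∑ j, q j * w j = ∑ j, r j * w j := by
    simp only [← sum_sub_distrib, ← sub_mul, hr]
  have hq₁ : 0 ≤ ∑ j, max 0 (-r j) * w j :=
    sum_nonneg fun j _ => mul_nonneg (le_max_left _ _) (hw j)
  have hnegPart_le : ∑ j, max 0 (-r j) * w j ≤ ∑ j, q j * w j :=
    sum_le_sum fun j _ => mul_le_mul_of_nonneg_right
      (max_le (hq j) (by linarith [hr j, hp j])) (hw j)
  exact sum_sq_sub_mulUpdate_le r w hv he hpq₁ hpq₂ hq₁ hnegPart_le hden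

end RowObjective

theorem stmt_7_general (m n : ℕ) (M P N : Fin m → Fin n → ℝ)
    (hP : ∀ i j, 0 ≤ P i j) (hN : ∀ i j, 0 ≤ N i j)
    (hM : ∀ i j, M i j = P i j - N i j)
    (w : Fin n → ℝ) (hw : ∀ j, 0 ≤ w j)
    (v : Fin m → ℝ) (hv : ∀ i, 0 ≤ v i)
    (hden1 : ∀ i, 0 < v i * (∑ j, (w j) ^ 2) + ∑ j, max 0 (- M i j) * w j)
    (v₁ v₂ : Fin m → ℝ)
    (hv₁ : ∀ i, v₁ i = v i * (∑ j, max 0 (M i j) * w j)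
        / (v i * (∑ j, (w j) ^ 2) + ∑ j, max 0 (- M i j) * w j))
    (hv₂ : ∀ i, v₂ i = v i * (∑ j, P i j * w j)
        / (v i * (∑ j, (w j) ^ 2) + ∑ j, N i j * w j)) :
    (∑ i, ∑ j, (M i j - v₁ i * w j) ^ 2 ≤ ∑ i, ∑ j, (M i j - v₂ i * w j) ^ 2) ∧
    (∑ i, ∑ j, (M i j - v₂ i * w j) ^ 2 ≤ ∑ i, ∑ j, (M i j - v i * w j) ^ 2) := by
  have row : ∀ i, ∑ j, (M i j - v₁ i * w j) ^ 2 ≤ ∑ j, (M i j - v₂ i * w j) ^ 2 ∧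
      ∑ j, (M i j - v₂ i * w j) ^ 2 ≤ ∑ j, (M i j - v i * w j) ^ 2 := fun i => by
    rw [hv₁ i, hv₂ i]
    exact sum_sq_sub_mulUpdate_posPart_le (M i) (P i) (N i) w (hP i) (hN i) (hM i) hw (hv i)
      (hden1 i)
  exact ⟨sum_le_sum fun i _ => (row i).1, sum_le_sum fun i _ => (row i).2⟩

/-- The multiplicative update with P = M₊, N = M₋ is at least as good as
the one given by any other splitting M = P - N, which is at least as good as v. -/
theorem stmt_7 (m n : ℕ) (M P N : Fin m → Fin n → ℝ)
    (hP : ∀ i j, 0 ≤ P i j) (hN : ∀ i j, 0 ≤ N i j)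
    (hM : ∀ i j, M i j = P i j - N i j)
    (w : Fin n → ℝ) (hw : ∀ j, 0 ≤ w j)
    (v : Fin m → ℝ) (hv : ∀ i, 0 ≤ v i)
    (hden1 : ∀ i, 0 < v i * (∑ j, (w j) ^ 2) + ∑ j, max 0 (- M i j) * w j)
    (hden2 : ∀ i, 0 < v i * (∑ j, (w j) ^ 2) + ∑ j, N i j * w j)
    (v₁ v₂ : Fin m → ℝ)
    (hv₁ : ∀ i, v₁ i = v i * (∑ j, max 0 (M i j) * w j)
        / (v i * (∑ j, (w j) ^ 2) + ∑ j, max 0 (- M i j) * w j))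
    (hv₂ : ∀ i, v₂ i = v i * (∑ j, P i j * w j)
        / (v i * (∑ j, (w j) ^ 2) + ∑ j, N i j * w j)) :
    (∑ i, ∑ j, (M i j - v₁ i * w j) ^ 2 ≤ ∑ i, ∑ j, (M i j - v₂ i * w j) ^ 2) ∧
    (∑ i, ∑ j, (M i j - v₂ i * w j) ^ 2 ≤ ∑ i, ∑ j, (M i j - v i * w j) ^ 2) :=
  stmt_7_general m n M P N hP hN hM w hw v hv hden1 v₁ v₂ hv₁ hv₂
end

section
/- Let M ∈ ℝ^{m×n}, and let v ∈ ℝᵐ₊ \ {0}, w ∈ (ℝⁿ)ᵀ₊ \ {0} be nonnegative nonzero vectors. Then (v,w) satisfies the KKT conditions of min_{v,w ≥ 0} ||M - vw||_F² (namely v ≥ 0, (vw - M)wᵀ ≥ 0, v ∘ ((vw - M)wᵀ) = 0, and symmetrically for w) if and only if v = max(0, Mwᵀ/||w||₂²) and w = max(0, vᵀM/||v||₂²). -/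
/-!
The conditions decouple coordinatewise. The partial gradient in `v i` is
`v i * ‖w‖² - (M wᵀ) i` with `‖w‖² > 0`, and for a scalar `x ≥ 0` and `W > 0` the
complementarity conditions `x W - A ≥ 0`, `x (x W - A) = 0` hold exactly when `x` is the
projection `max 0 (A / W)` of the unconstrained minimiser onto `[0, ∞)`; symmetrically for `w j`.
-/

open Finset

lemma complementarity_iff_eq_max_zero_div {W A x : ℝ} (hW : 0 < W) (hx : 0 ≤ x) :
    (0 ≤ x * W - A ∧ x * (x * W - A) = 0) ↔ x = max 0 (A / W) := by
  rcases hx.eq_or_lt with rfl | hx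
  · simp [div_nonpos_iff, hW.not_ge, hW.le]
  · rw [mul_eq_zero, or_iff_right hx.ne', sub_eq_zero]
    constructor
    · rintro ⟨-, h⟩
      rw [← h, mul_div_cancel_right₀ x hW.ne', max_eq_right hx.le]
    · intro h
      have hAW : A / W = x := ((max_eq_iff.mp h.symm).resolve_left fun h0 => hx.ne h0.1).1
      rw [← hAW, div_mul_cancel₀ A hW.ne']
      simp

lemma sum_sq_pos_of_ne_zero {ι : Type*} [Fintype ι] {u : ι → ℝ} (hu : u ≠ 0) :
    0 < ∑ j, u j ^ 2 := by
  obtain ⟨j, hj⟩ := Function.ne_iff.mp hu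
  exact sum_pos' (fun j _ => sq_nonneg (u j)) ⟨j, mem_univ j, sq_pos_of_ne_zero hj⟩

lemma sum_sub_mul_self_eq {ι R : Type*} [CommRing R] (s : Finset ι) (a : R) (u b : ι → R) :
    ∑ j ∈ s, (a * u j - b j) * u j = a * ∑ j ∈ s, u j ^ 2 - ∑ j ∈ s, b j * u j := by
  rw [mul_sum, ← sum_sub_distrib]
  exact sum_congr rfl fun j _ => by ring

lemma sum_mul_self_sub_eq {ι R : Type*} [CommRing R] (s : Finset ι) (a : R) (u b : ι → R) :
    ∑ i ∈ s, u i * (u i * a - b i) = a * ∑ i ∈ s, u i ^ 2 - ∑ i ∈ s, u i * b i := by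
  rw [mul_sum, ← sum_sub_distrib]
  exact sum_congr rfl fun i _ => by ring

/-- For nonnegative nonzero v, w, the KKT conditions of
min_{v,w≥0} ‖M - vw‖_F² are equivalent to the closed-form fixed-point equations. -/
theorem stmt_11 (m n : ℕ) (M : Fin m → Fin n → ℝ)
    (v : Fin m → ℝ) (w : Fin n → ℝ)
    (hv : ∀ i, 0 ≤ v i) (hw : ∀ j, 0 ≤ w j) (hv0 : v ≠ 0) (hw0 : w ≠ 0) :
    ((∀ i, 0 ≤ ∑ j, (v i * w j - M i j) * w j) ∧
     (∀ i, v i * (∑ j, (v i * w j - M i j) * w j) = 0) ∧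
     (∀ j, 0 ≤ ∑ i, v i * (v i * w j - M i j)) ∧
     (∀ j, w j * (∑ i, v i * (v i * w j - M i j)) = 0))
    ↔
    ((∀ i, v i = max 0 ((∑ j, M i j * w j) / (∑ j, (w j) ^ 2))) ∧
     (∀ j, w j = max 0 ((∑ i, v i * M i j) / (∑ i, (v i) ^ 2)))) := by
  simp only [sum_sub_mul_self_eq, sum_mul_self_sub_eq, ← and_assoc, ← forall_and]
  exact and_congr
    (forall_congr' fun i => complementarity_iff_eq_max_zero_div (sum_sq_pos_of_ne_zero hw0) (hv i))
    (forall_congr' fun j => complementarity_iff_eq_max_zero_div (sum_sq_pos_of_ne_zero hv0) (hw j))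
end

section
/- Let M ∈ ℝ^{m×n}₊ be a nonnegative matrix of rank 2. Then there exist nonnegative matrices V ∈ ℝ^{m×2}₊ and W ∈ ℝ^{2×n}₊ such that M = VW. -/
/-!
The columns of `M` span a plane `T`, and the coordinate sum `s` is positive on every nonzero
column. Rescaling the nonzero columns to `s = 1` puts them on the line `T ∩ {s = 1}`, so they
all lie in the segment between two extreme ones; undoing the rescaling, every column is a
nonnegative combination of the two corresponding columns of `M`, which form `V`.
-/

open Module Submodule

section

variable {E : Type*} [AddCommGroup E] [Module ℝ E]

theorem Collinear.exists_forall_mem_segment {ι : Type*} [Finite ι] [Nonempty ι] {u : ι → E}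
    (h : Collinear ℝ (Set.range u)) : ∃ p q, ∀ j, u j ∈ segment ℝ (u p) (u q) := by
  obtain ⟨j₀⟩ := ‹Nonempty ι›
  obtain ⟨v, hv⟩ := (collinear_iff_of_mem (Set.mem_range_self j₀)).1 h
  choose t ht using fun j ↦ hv (u j) (Set.mem_range_self j)
  set f : ℝ →ᵃ[ℝ] E := AffineMap.lineMap (u j₀) (v +ᵥ u j₀)
  have hf : ∀ j, f (t j) = u j := fun j ↦ by
    simpa [f, AffineMap.lineMap_apply] using (ht j).symm
  obtain ⟨p, hp⟩ := Finite.exists_min t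
  obtain ⟨q, hq⟩ := Finite.exists_max t
  refine ⟨p, q, fun j ↦ ?_⟩
  rw [← hf, ← hf, ← hf, ← image_segment]
  exact Set.mem_image_of_mem f <| by
    rw [segment_eq_Icc ((hp j).trans (hq j))]; exact ⟨hp j, hq j⟩

theorem collinear_of_finrank_le_two_of_forall_eq_one [FiniteDimensional ℝ E]
    {T : Submodule ℝ E} (hT : finrank ℝ T ≤ 2) (s : E →ₗ[ℝ] ℝ) {S : Set E} (hST : S ⊆ T)
    (hS : ∀ x ∈ S, s x = 1) : Collinear ℝ S := by
  rcases S.eq_empty_or_nonempty with rfl | ⟨x, hx⟩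
  · exact collinear_empty ℝ E
  have hspan : vectorSpan ℝ S ≤ T ⊓ LinearMap.ker s := by
    rw [vectorSpan_def, Submodule.span_le]
    rintro _ ⟨y, hy, z, hz, rfl⟩
    exact ⟨T.sub_mem (hST hy) (hST hz), by simp [hS y hy, hS z hz]⟩
  have hlt : T ⊓ LinearMap.ker s < T :=
    inf_lt_left.2 fun hle ↦ by simpa [hS x hx] using (hle (hST hx) : x ∈ LinearMap.ker s)
  rw [collinear_iff_finrank_le_one]
  have := Submodule.finrank_lt_finrank_of_lt hlt
  have := Submodule.finrank_mono hspan
  omega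

theorem exists_pair_nonneg_combination_of_pos [FiniteDimensional ℝ E] {ι : Type*} [Finite ι]
    [Nonempty ι] {c : ι → E} (hc : finrank ℝ (span ℝ (Set.range c)) ≤ 2) (s : E →ₗ[ℝ] ℝ)
    (hs : ∀ j, 0 < s (c j)) :
    ∃ p q, ∀ j, ∃ a b : ℝ, 0 ≤ a ∧ 0 ≤ b ∧ c j = a • c p + b • c q := by
  set u : ι → E := fun j ↦ (s (c j))⁻¹ • c j
  have hu : Collinear ℝ (Set.range u) := by
    refine collinear_of_finrank_le_two_of_forall_eq_one hc s ?_ ?_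
    · rintro _ ⟨j, rfl⟩
      exact smul_mem _ _ (subset_span (Set.mem_range_self j))
    · rintro _ ⟨j, rfl⟩
      simp [u, (hs j).ne']
  obtain ⟨p, q, hpq⟩ := hu.exists_forall_mem_segment
  refine ⟨p, q, fun j ↦ ?_⟩
  obtain ⟨a, b, ha, hb, -, hab⟩ := hpq j
  refine ⟨s (c j) * a * (s (c p))⁻¹, s (c j) * b * (s (c q))⁻¹,
    mul_nonneg (mul_nonneg (hs j).le ha) (inv_nonneg.2 (hs p).le),
    mul_nonneg (mul_nonneg (hs j).le hb) (inv_nonneg.2 (hs q).le), ?_⟩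
  calc c j = s (c j) • u j := by simp [u, (hs j).ne']
    _ = _ := by rw [← hab]; simp only [u]; module

theorem exists_pair_nonneg_combination [FiniteDimensional ℝ E] {ι : Type*} [Finite ι]
    [Nonempty ι] {c : ι → E} (hc : finrank ℝ (span ℝ (Set.range c)) ≤ 2) (s : E →ₗ[ℝ] ℝ)
    (hs : ∀ j, c j ≠ 0 → 0 < s (c j)) :
    ∃ p q, ∀ j, ∃ a b : ℝ, 0 ≤ a ∧ 0 ≤ b ∧ c j = a • c p + b • c q := by
  by_cases h : ∃ j, c j ≠ 0
  · obtain ⟨j₀, hj₀⟩ := h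
    have : Nonempty {j // c j ≠ 0} := ⟨⟨j₀, hj₀⟩⟩
    have hc' : finrank ℝ (span ℝ (Set.range fun j : {j // c j ≠ 0} ↦ c j)) ≤ 2 :=
      (Submodule.finrank_mono (span_mono (Set.range_comp_subset_range _ c))).trans hc
    obtain ⟨p, q, hpq⟩ := exists_pair_nonneg_combination_of_pos hc' s fun j ↦ hs j j.2
    refine ⟨p, q, fun j ↦ ?_⟩
    by_cases hj : c j = 0
    · exact ⟨0, 0, le_rfl, le_rfl, by simp [hj]⟩
    · exact hpq ⟨j, hj⟩
  · push Not at h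
    obtain ⟨j₀⟩ := ‹Nonempty ι›
    exact ⟨j₀, j₀, fun j ↦ ⟨0, 0, le_rfl, le_rfl, by simp [h]⟩⟩

end

/-- Any nonnegative matrix of rank 2 admits an exact nonnegative
factorization of rank 2. -/
theorem stmt_15 (m n : ℕ) (M : Matrix (Fin m) (Fin n) ℝ)
    (hM : ∀ i j, 0 ≤ M i j) (hrank : M.rank = 2) :
    ∃ (V : Matrix (Fin m) (Fin 2) ℝ) (W : Matrix (Fin 2) (Fin n) ℝ),
      (∀ i k, 0 ≤ V i k) ∧ (∀ k j, 0 ≤ W k j) ∧ M = V * W := by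
  have : Nonempty (Fin n) := ⟨⟨0, by have := M.rank_le_width; omega⟩⟩
  let s : (Fin m → ℝ) →ₗ[ℝ] ℝ := ∑ i, LinearMap.proj i
  have hs : ∀ j, M.col j ≠ 0 → 0 < s (M.col j) := fun j hj ↦ by
    simpa [s] using Fintype.sum_pos (lt_of_le_of_ne (fun i ↦ hM i j) hj.symm)
  obtain ⟨p, q, hpq⟩ :=
    exists_pair_nonneg_combination (hrank ▸ M.rank_eq_finrank_span_cols).ge s hs
  choose a b ha hb hab using hpq
  refine ⟨Matrix.of fun i k ↦ ![M i p, M i q] k, Matrix.of fun k j ↦ ![a j, b j] k, ?_, ?_, ?_⟩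
  · intro i k; fin_cases k <;> simp [hM]
  · intro k j; fin_cases k <;> simp [ha, hb]
  · ext i j
    simpa [Matrix.mul_apply, Fin.sum_univ_two, mul_comm] using congrFun (hab j) i
end

section
/- Let M_b ∈ {0,1}^{m×n} be an adjacency matrix with |E| ones, M_d = (1+d)M_b - d·J, and let (v,w) be a nontrivial positive stationary point with ||w||₂ = 1 and ||v||₂ ≤ √|E|, with v = M_d wᵀ, wᵀ = M_dᵀv/||v||₂². If A = {i : M_d(i,j) = 1 ∀j} is empty, then d ≤ m√|E|; in particular, for d > m√|E| there is no such stationary point with A = ∅. -/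
/-!
Write `L = ∑ i, v i`. By the fixed-point equation for `w`, `w j > 0` forces column `j` of
`M_d` to pair positively with `v`, i.e. `d L < (1 + d) ∑ i, M_b i j v i`. If row `i` has a
zero in column `j`, the right-hand sum misses `v i`, so `(1 + d) v i < L`. As no row is all
ones this holds for every `i`, and summing over the `m` rows gives `1 + d < m`. The same
inequality for any column shows that `M_b` has a one, so `|E| ≥ 1` and `d < m ≤ m √|E|`.
-/

open Finset

lemma sum_affine_mul {ι R : Type*} [Fintype ι] [CommRing R] (a v : ι → R) (c d : R) :
    ∑ i, (c * a i - d) * v i = c * ∑ i, a i * v i - d * ∑ i, v i := by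
  simp only [sub_mul, sum_sub_distrib, mul_sum, mul_assoc]

section OrderedField

variable {ι R : Type*} [Fintype ι] [Field R] [LinearOrder R] [IsStrictOrderedRing R]

lemma sum_mul_le_sum_sub_of_eq_zero [DecidableEq ι] {a v : ι → R} (ha : ∀ k, a k ≤ 1)
    (hv : ∀ k, 0 ≤ v k) {i : ι} (hi : a i = 0) :
    ∑ k, a k * v k ≤ ∑ k, v k - v i := by
  rw [← add_sum_erase univ _ (mem_univ i), hi, zero_mul, zero_add,
    ← sum_erase_eq_sub (mem_univ i)]
  exact sum_le_sum fun k _ => mul_le_of_le_one_left (hv k) (ha k)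

lemma mul_lt_sum_of_lt_mul_sum_mul [DecidableEq ι] {a v : ι → R} (ha : ∀ k, a k ≤ 1)
    (hv : ∀ k, 0 ≤ v k) {d : R} (hd : 0 ≤ 1 + d) {i : ι} (hi : a i = 0)
    (h : d * ∑ k, v k < (1 + d) * ∑ k, a k * v k) :
    (1 + d) * v i < ∑ k, v k := by
  have := mul_le_mul_of_nonneg_left (sum_mul_le_sum_sub_of_eq_zero ha hv hi) hd
  linarith

lemma lt_card_of_forall_mul_lt_sum [Nonempty ι] {v : ι → R} (hv : ∀ i, 0 < v i) {c : R}
    (h : ∀ i, c * v i < ∑ k, v k) : c < Fintype.card ι := by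
  have hsum : c * ∑ k, v k < Fintype.card ι * ∑ k, v k :=
    calc c * ∑ k, v k = ∑ i, c * v i := mul_sum _ _ _
      _ < ∑ _i : ι, ∑ k, v k := sum_lt_sum_of_nonempty univ_nonempty fun i _ => h i
      _ = Fintype.card ι * ∑ k, v k := by rw [sum_const, card_univ, nsmul_eq_mul]
  exact lt_of_mul_lt_mul_right hsum (sum_nonneg fun i _ => (hv i).le)

lemma one_le_sum_sum_of_eq_one {κ : Type*} [Fintype κ] {M : ι → κ → R}
    (hM : ∀ i j, 0 ≤ M i j) {i : ι} {j : κ} (hij : M i j = 1) :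
    1 ≤ ∑ i, ∑ j, M i j :=
  calc (1 : R) = M i j := hij.symm
    _ ≤ ∑ j, M i j := single_le_sum (fun j _ => hM i j) (mem_univ j)
    _ ≤ ∑ i, ∑ j, M i j :=
      single_le_sum (fun i _ => sum_nonneg fun j _ => hM i j) (mem_univ i)

lemma pos_of_div_pos_of_nonneg {a b : R} (hb : 0 ≤ b) (h : 0 < a / b) : 0 < a := by
  rcases div_pos_iff.mp h with h | h
  · exact h.1
  · exact absurd hb (not_le.mpr h.2)

end OrderedField

theorem stmt_17_general (m n : ℕ) (Mb : Fin m → Fin n → ℝ)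
    (hbin : ∀ i j, Mb i j = 0 ∨ Mb i j = 1)
    (d : ℝ) (hd0 : 0 < d)
    (Md : Fin m → Fin n → ℝ) (hMd : ∀ i j, Md i j = (1 + d) * Mb i j - d)
    (v : Fin m → ℝ) (w : Fin n → ℝ)
    (hv : ∀ i, 0 < v i) (hw : ∀ j, 0 < w j)
    (hwnorm : ∑ j, (w j) ^ 2 = 1)
    (hsw : ∀ j, w j = (∑ i, Md i j * v i) / (∑ i, (v i) ^ 2))
    (hA : ∀ i, ∃ j, Mb i j = 0) :
    d ≤ m * Real.sqrt (∑ i, ∑ j, Mb i j) := by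
  have hMb_nonneg : ∀ i j, 0 ≤ Mb i j := fun i j => by rcases hbin i j with h | h <;> simp [h]
  have hMb_le_one : ∀ i j, Mb i j ≤ 1 := fun i j => by rcases hbin i j with h | h <;> simp [h]
  have hcol : ∀ j, d * ∑ i, v i < (1 + d) * ∑ i, Mb i j * v i := fun j => by
    have := pos_of_div_pos_of_nonneg (sum_nonneg fun i _ => sq_nonneg (v i)) (hsw j ▸ hw j)
    simp only [hMd, sum_affine_mul] at this
    linarith
  obtain ⟨j₀⟩ : Nonempty (Fin n) := by
    by_contra! h
    simp at hwnorm
  obtain ⟨i₀, -, hi₀⟩ : ∃ i ∈ univ, 0 < Mb i j₀ * v i := by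
    refine exists_lt_of_sum_lt ?_
    have hL : 0 ≤ d * ∑ i, v i := mul_nonneg hd0.le (sum_nonneg fun i _ => (hv i).le)
    simpa only [sum_const_zero] using pos_of_mul_pos_right (hL.trans_lt (hcol j₀)) (by linarith)
  have hE : 1 ≤ Real.sqrt (∑ i, ∑ j, Mb i j) := by
    refine Real.one_le_sqrt.mpr (one_le_sum_sum_of_eq_one hMb_nonneg (i := i₀) (j := j₀) ?_)
    exact (hbin i₀ j₀).resolve_left fun h => by simp [h] at hi₀
  have : Nonempty (Fin m) := ⟨i₀⟩
  have hm : 1 + d < m := by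
    simpa using lt_card_of_forall_mul_lt_sum hv fun i =>
      let ⟨j, hj⟩ := hA i
      mul_lt_sum_of_lt_mul_sum_mul (hMb_le_one · j) (fun k => (hv k).le) (by linarith) hj (hcol j)
  calc d ≤ m := by linarith
    _ ≤ m * Real.sqrt (∑ i, ∑ j, Mb i j) := le_mul_of_one_le_right (Nat.cast_nonneg m) hE

/-- If the set A of all-ones rows of M_b is empty, then any nontrivial
positive stationary point with ‖w‖₂ = 1, ‖v‖₂ ≤ √|E|, v = M_d wᵀ, wᵀ = M_dᵀv/‖v‖₂²
forces d ≤ m√|E|; hence for d > m√|E| no such stationary point exists. -/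
theorem stmt_17 (m n : ℕ) (Mb : Fin m → Fin n → ℝ)
    (hbin : ∀ i j, Mb i j = 0 ∨ Mb i j = 1)
    (d : ℝ) (hd0 : 0 < d)
    (Md : Fin m → Fin n → ℝ) (hMd : ∀ i j, Md i j = (1 + d) * Mb i j - d)
    (v : Fin m → ℝ) (w : Fin n → ℝ)
    (hv : ∀ i, 0 < v i) (hw : ∀ j, 0 < w j)
    (hwnorm : ∑ j, (w j) ^ 2 = 1)
    (hvbound : Real.sqrt (∑ i, (v i) ^ 2) ≤ Real.sqrt (∑ i, ∑ j, Mb i j))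
    (hsv : ∀ i, v i = ∑ j, Md i j * w j)
    (hsw : ∀ j, w j = (∑ i, Md i j * v i) / (∑ i, (v i) ^ 2))
    (hA : ∀ i, ∃ j, Mb i j = 0) :
    d ≤ m * Real.sqrt (∑ i, ∑ j, Mb i j) :=
  stmt_17_general m n Mb hbin d hd0 Md hMd v w hv hw hwnorm hsw hA
end
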